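/- arXiv:1604.03284 — 2 statements merged into one kernel-verified Lean document; each statement's English description precedes it below -/
import Mathlib

section
/- Fix α ∈ (0,1). There exists a constant C = C(α) > 0 such that for every measurable function θ : ℝ² → [0,∞) with finite moment of inertia i₀ = ∫_{ℝ²} |y|² θ(y) dy and every x ∈ ℝ² with x ≠ 0, | ∫_{{y : |x−y| ≥ |x|/2}} (x·y^⊥ / |x|) ( |x−y|^{−(2+α)} − |x|^{−(2+α)} ) θ(y) dy | ≤ C i₀ / |x|^{3+α}. -/
open MeasureTheory Real Set
open scoped RealInnerProductSpace

noncomputable section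

/-- The plane `ℝ²` with the Euclidean norm. -/
abbrev R2 := EuclideanSpace ℝ (Fin 2)

/-- The rotation by `π/2`: `y^⊥ = (-y₂, y₁)`. -/
def perp (y : R2) : R2 := (WithLp.equiv 2 (Fin 2 → ℝ)).symm ![-y 1, y 0]

/-!
The integrand is bounded pointwise by `C(α) |y|² θ(y) / |x|^{3+α}`: Cauchy–Schwarz gives
`|x·y^⊥| / |x| ≤ |y|`, and on the region `|x - y| ≥ |x|/2` the mean value theorem for
`r ↦ r^{-(2+α)}` on `[|x|/2, ∞)` bounds the kernel difference by
`(2+α) (|x|/2)^{-(3+α)} ||x - y| - |x|| ≤ (2+α) 2^{3+α} |y| / |x|^{3+α}`.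
-/

lemma norm_perp (y : R2) : ‖perp y‖ = ‖y‖ := by
  simp only [EuclideanSpace.norm_eq, perp, Fin.sum_univ_two, WithLp.equiv_symm_apply]
  simp [add_comm]

lemma abs_inner_perp_le (x y : R2) : |⟪x, perp y⟫| ≤ ‖x‖ * ‖y‖ :=
  norm_perp y ▸ abs_real_inner_le_norm x (perp y)

lemma abs_rpow_sub_rpow_le {p c a b : ℝ} (hp : p ≤ 1) (hc : 0 < c) (ha : c ≤ a) (hb : c ≤ b) :
    |a ^ p - b ^ p| ≤ |p| * c ^ (p - 1) * |a - b| := by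
  have hderiv : ∀ t ∈ Ici c, HasDerivWithinAt (· ^ p) (p * t ^ (p - 1)) (Ici c) t :=
    fun t ht => (hasDerivAt_rpow_const (Or.inl (hc.trans_le ht).ne')).hasDerivWithinAt
  have hbound : ∀ t ∈ Ici c, ‖p * t ^ (p - 1)‖ ≤ |p| * c ^ (p - 1) := fun t ht => by
    rw [norm_mul, norm_eq_abs, norm_of_nonneg (rpow_nonneg (hc.le.trans ht) _)]
    exact mul_le_mul_of_nonneg_left (rpow_le_rpow_of_nonpos hc ht (by linarith)) (abs_nonneg p)
  simpa only [norm_eq_abs] using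
    (convex_Ici c).norm_image_sub_le_of_norm_hasDerivWithin_le hderiv hbound hb ha

lemma abs_rpow_norm_sub_sub_rpow_norm_le {E : Type*} [SeminormedAddCommGroup E] {p : ℝ}
    (hp : p ≤ 1) {x y : E} (hx : 0 < ‖x‖) (hy : ‖x‖ / 2 ≤ ‖x - y‖) :
    |‖x - y‖ ^ p - ‖x‖ ^ p| ≤ |p| * (‖x‖ / 2) ^ (p - 1) * ‖y‖ := by
  have hdist : |‖x - y‖ - ‖x‖| ≤ ‖y‖ := by
    simpa using abs_norm_sub_norm_le (x - y) x
  calc |‖x - y‖ ^ p - ‖x‖ ^ p| ≤ |p| * (‖x‖ / 2) ^ (p - 1) * |‖x - y‖ - ‖x‖| :=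
        abs_rpow_sub_rpow_le hp (half_pos hx) hy (half_le_self hx.le)
    _ ≤ |p| * (‖x‖ / 2) ^ (p - 1) * ‖y‖ := by gcongr

lemma abs_far_field_kernel_le {α : ℝ} (hα : -2 ≤ α) {x y : R2} (hx : x ≠ 0)
    (hy : ‖x‖ / 2 ≤ ‖x - y‖) :
    |(⟪x, perp y⟫ / ‖x‖) * (‖x - y‖ ^ (-(2 + α)) - ‖x‖ ^ (-(2 + α)))| ≤
      (2 + α) * 2 ^ (3 + α) / ‖x‖ ^ (3 + α) * ‖y‖ ^ 2 := by
  have hx' : 0 < ‖x‖ := norm_pos_iff.mpr hx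
  have hinner : |⟪x, perp y⟫ / ‖x‖| ≤ ‖y‖ := by
    rw [abs_div, abs_of_pos hx', div_le_iff₀ hx', mul_comm]
    exact abs_inner_perp_le x y
  have hkernel := abs_rpow_norm_sub_sub_rpow_norm_le (p := -(2 + α)) (by linarith) hx' hy
  have hcoef :
      |-(2 + α)| * (‖x‖ / 2) ^ (-(2 + α) - 1) = (2 + α) * 2 ^ (3 + α) / ‖x‖ ^ (3 + α) := by
    rw [abs_neg, abs_of_nonneg (by linarith), show -(2 + α) - 1 = -(3 + α) by ring,
      rpow_neg (by positivity), div_rpow hx'.le zero_le_two, inv_div, mul_div_assoc]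
  rw [hcoef] at hkernel
  calc _ = |⟪x, perp y⟫ / ‖x‖| * |‖x - y‖ ^ (-(2 + α)) - ‖x‖ ^ (-(2 + α))| := abs_mul _ _
    _ ≤ ‖y‖ * ((2 + α) * 2 ^ (3 + α) / ‖x‖ ^ (3 + α) * ‖y‖) :=
        mul_le_mul hinner hkernel (abs_nonneg _) (norm_nonneg _)
    _ = _ := by ring

lemma abs_setIntegral_le_integral_of_abs_le {X : Type*} [MeasurableSpace X] {μ : Measure X}
    {f g : X → ℝ} {s : Set X} (hs : MeasurableSet s) (hg : Integrable g μ) (hg0 : 0 ≤ g)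
    (hfg : ∀ y ∈ s, |f y| ≤ g y) :
    |∫ y in s, f y ∂μ| ≤ ∫ y, g y ∂μ :=
  calc |∫ y in s, f y ∂μ| ≤ ∫ y in s, g y ∂μ :=
        norm_integral_le_of_norm_le (f := f) hg.restrict (ae_restrict_of_forall_mem hs hfg)
    _ ≤ ∫ y, g y ∂μ := setIntegral_le_integral hg (Filter.Eventually.of_forall hg0)

/-- There is a constant `C = C(α) > 0` such that for every nonnegative measurable `θ` with
finite moment of inertia `i₀ = ∫ |y|² θ(y) dy` and every `x ≠ 0`,
`| ∫_{|x-y| ≥ |x|/2} (x·y^⊥/|x|) (|x-y|^{-(2+α)} - |x|^{-(2+α)}) θ(y) dy | ≤ C i₀ / |x|^{3+α}`. -/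
theorem far_field_integral_bound (α : ℝ) (hα : α ∈ Set.Ioo (0 : ℝ) 1) :
    ∃ C : ℝ, 0 < C ∧ ∀ θ : R2 → ℝ, Measurable θ → (∀ y, 0 ≤ θ y) →
      Integrable (fun y => ‖y‖ ^ 2 * θ y) →
      ∀ x : R2, x ≠ 0 →
        |∫ y in {y : R2 | ‖x‖ / 2 ≤ ‖x - y‖},
            (⟪x, perp y⟫ / ‖x‖) * (‖x - y‖ ^ (-(2 + α)) - ‖x‖ ^ (-(2 + α))) * θ y| ≤
          C * (∫ y, ‖y‖ ^ 2 * θ y) / ‖x‖ ^ (3 + α) := by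
  obtain ⟨hα0, -⟩ := hα
  have hC : 0 < (2 + α) * 2 ^ (3 + α) := mul_pos (by linarith) (by positivity)
  refine ⟨(2 + α) * 2 ^ (3 + α), hC, fun θ _ hθ hint x hx => ?_⟩
  have hregion : MeasurableSet {y : R2 | ‖x‖ / 2 ≤ ‖x - y‖} :=
    measurableSet_le measurable_const (measurable_const.sub measurable_id).norm
  calc _ ≤ ∫ y, (2 + α) * 2 ^ (3 + α) / ‖x‖ ^ (3 + α) * (‖y‖ ^ 2 * θ y) :=
        abs_setIntegral_le_integral_of_abs_le hregion (hint.const_mul _)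
          (fun y => mul_nonneg (div_nonneg hC.le (by positivity))
            (mul_nonneg (by positivity) (hθ y)))
          fun y hy => by
            rw [abs_mul, abs_of_nonneg (hθ y), ← mul_assoc]
            exact mul_le_mul_of_nonneg_right (abs_far_field_kernel_le (by linarith) hx hy) (hθ y)
    _ = _ := by rw [integral_const_mul]; ring
end
end

section
/- Fix α ∈ (0,1). There exists a constant C = C(α) > 0 such that for every measurable function θ : ℝ² → [0,∞) in L¹(ℝ²) ∩ L^∞(ℝ²) with M₀ = ‖θ‖_{L^∞}, and every x ∈ ℝ² with x ≠ 0, ∫_{{y : |x−y| < |x|/2}} θ(y) |x−y|^{−(1+α)} dy ≤ C M₀^{(1+α)/2} ( ∫_{{y : |y| > |x|/2}} θ(y) dy )^{(1−α)/2}. -/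
/-!
Split the near region at the radius `r` with `M₀ r² = I`, where `I` is the mass of `θ` on
`{|y| > |x|/2}`, a set containing the near region. On `B(x, r)` bound `θ` by `M₀` and integrate
the kernel in polar coordinates: in dimension `d`, for `s < d`,
`∫_{B(x,r)} |x - y|^{-s} dy = d/(d-s) |B₁| r^{d-s}`.
Off `B(x, r)` the kernel is at most `r^{-s}`, so that part is at most `r^{-s} I`.
With this choice of `r` both bounds equal `M₀ r^{d-s} = M₀^{s/d} I^{1-s/d}`; here `d = 2` and
`s = 1 + α`.
-/

open MeasureTheory Real Set
open scoped ENNReal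

noncomputable section

open Metric Module

theorem rpow_mul_rpow_eq_mul_rpow_sub {M I d s r : ℝ} (hM : 0 ≤ M) (hr : 0 < r) (hd : 0 < d)
    (hI : I = M * r ^ d) : M ^ (s / d) * I ^ (1 - s / d) = M * r ^ (d - s) := by
  have hexp : d * (1 - s / d) = d - s := by field_simp
  rw [hI, Real.mul_rpow hM (by positivity), ← Real.rpow_mul hr.le, hexp, ← mul_assoc,
    ← Real.rpow_add' hM (by simp), add_sub_cancel, Real.rpow_one]

theorem ae_le_of_eLpNorm_top_le {α : Type*} [MeasurableSpace α] {μ : Measure α} {f : α → ℝ}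
    {M : ℝ} (h : eLpNorm f ∞ μ ≤ ENNReal.ofReal M) (hM : 0 ≤ M) : ∀ᵐ y ∂μ, f y ≤ M := by
  filter_upwards [ae_le_eLpNormEssSup (f := f) (μ := μ)] with y hy
  rw [← eLpNorm_exponent_top, ← ofReal_norm] at hy
  exact (le_abs_self _).trans ((ENNReal.ofReal_le_ofReal_iff hM).1 (hy.trans h))

section
variable {E : Type*} [SeminormedAddCommGroup E] [MeasurableSpace E] [OpensMeasurableSpace E]
  (μ : Measure E)

theorem setLIntegral_mul_rpow_norm_sub_le_add {θ : E → ℝ} {M s r : ℝ} (hs : 0 ≤ s) (hr : 0 < r)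
    (hθM : ∀ᵐ y ∂μ, θ y ≤ M) (S : Set E) (x : E) :
    ∫⁻ y in S, ENNReal.ofReal (θ y * ‖x - y‖ ^ (-s)) ∂μ ≤
      ENNReal.ofReal M * ∫⁻ y in ball x r, ENNReal.ofReal (‖x - y‖ ^ (-s)) ∂μ +
        ENNReal.ofReal (r ^ (-s)) * ∫⁻ y in S, ENNReal.ofReal (θ y) ∂μ := by
  set K : E → ℝ≥0∞ := fun y ↦ ENNReal.ofReal (‖x - y‖ ^ (-s))
  have hK : Measurable K :=
    ((continuous_const.sub continuous_id).norm.measurable.pow_const _).ennreal_ofReal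
  have hpt : ∀ᵐ y ∂μ, ENNReal.ofReal (θ y * ‖x - y‖ ^ (-s)) ≤
      ENNReal.ofReal M * (ball x r).indicator K y +
        ENNReal.ofReal (r ^ (-s)) * ENNReal.ofReal (θ y) := by
    filter_upwards [hθM] with y hy
    rw [ENNReal.ofReal_mul' (by positivity)]
    by_cases hyr : y ∈ ball x r
    · rw [indicator_of_mem hyr]
      exact le_add_right (by gcongr)
    · have : r ≤ ‖x - y‖ := by simpa [dist_eq_norm'] using hyr
      rw [mul_comm]
      exact le_add_left (mul_le_mul_left (ENNReal.ofReal_le_ofReal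
        (Real.rpow_le_rpow_of_nonpos hr this (neg_nonpos.2 hs))) _)
  calc ∫⁻ y in S, ENNReal.ofReal (θ y * ‖x - y‖ ^ (-s)) ∂μ
      ≤ ∫⁻ y in S, ENNReal.ofReal M * (ball x r).indicator K y +
          ENNReal.ofReal (r ^ (-s)) * ENNReal.ofReal (θ y) ∂μ :=
        lintegral_mono_ae (ae_restrict_of_ae hpt)
    _ = ENNReal.ofReal M * ∫⁻ y in S, (ball x r).indicator K y ∂μ +
          ENNReal.ofReal (r ^ (-s)) * ∫⁻ y in S, ENNReal.ofReal (θ y) ∂μ := by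
        rw [lintegral_add_left ((hK.indicator measurableSet_ball).const_mul _),
          lintegral_const_mul' _ _ ENNReal.ofReal_ne_top,
          lintegral_const_mul' _ _ ENNReal.ofReal_ne_top]
    _ ≤ _ := by
        grw [setLIntegral_le_lintegral, lintegral_indicator measurableSet_ball]

end

section
variable {E : Type*} [NormedAddCommGroup E] [NormedSpace ℝ E] [FiniteDimensional ℝ E]
  [Nontrivial E] [MeasurableSpace E] [BorelSpace E] (μ : Measure E) [μ.IsAddHaarMeasure]

theorem integral_ball_zero_norm_rpow_neg {s r : ℝ} (hs : s < finrank ℝ E) (hr : 0 ≤ r) :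
    ∫ y in ball (0 : E) r, ‖y‖ ^ (-s) ∂μ =
      finrank ℝ E / (finrank ℝ E - s) * μ.real (ball 0 1) * r ^ (finrank ℝ E - s) := by
  have hn : 1 ≤ finrank ℝ E := finrank_pos
  have hradial : ∫ t in Ioi (0 : ℝ),
      t ^ (finrank ℝ E - 1) • (Iio r).indicator (fun t ↦ t ^ (-s)) t =
        r ^ (finrank ℝ E - s) / (finrank ℝ E - s) := calc
    _ = ∫ t in Ioo 0 r, t ^ ((finrank ℝ E : ℝ) - s - 1) := by
      rw [← Ioi_inter_Iio, ← setIntegral_indicator measurableSet_Iio]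
      refine setIntegral_congr_fun measurableSet_Ioi fun t (ht : 0 < t) ↦ ?_
      by_cases htr : t < r
      · simp only [mem_Iio, htr, indicator_of_mem, smul_eq_mul, ← rpow_natCast,
          Nat.cast_sub hn, Nat.cast_one, ← rpow_add ht]
        ring_nf
      · simp [htr]
    _ = ∫ t in 0..r, t ^ ((finrank ℝ E : ℝ) - s - 1) := by
      rw [intervalIntegral.integral_of_le hr, integral_Ioc_eq_integral_Ioo]
    _ = _ := by
      rw [integral_rpow (Or.inl (by linarith)), sub_add_cancel, Real.zero_rpow (by linarith),
        sub_zero]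
  have hball : ∫ y in ball (0 : E) r, ‖y‖ ^ (-s) ∂μ =
      ∫ y, (Iio r).indicator (fun t ↦ t ^ (-s)) ‖y‖ ∂μ := by
    rw [← integral_indicator measurableSet_ball]
    congr with y
    simp [indicator]
  rw [hball, integral_fun_norm_addHaar, hradial, nsmul_eq_mul, smul_eq_mul]
  ring

theorem setLIntegral_ball_rpow_norm_sub {s r : ℝ} (hs : s < finrank ℝ E) (hr : 0 ≤ r) (x : E) :
    ∫⁻ y in ball x r, ENNReal.ofReal (‖x - y‖ ^ (-s)) ∂μ =
      ENNReal.ofReal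
        (finrank ℝ E / (finrank ℝ E - s) * μ.real (ball 0 1) * r ^ (finrank ℝ E - s)) := by
  have hint : IntegrableOn (fun y : E ↦ ‖y‖ ^ (-s)) (ball 0 r) μ :=
    integrableOn_ball_of_norm_le_rpow (C := 1) finrank_pos hs
      (.of_forall fun y ↦ by simp [abs_of_nonneg (Real.rpow_nonneg (norm_nonneg y) _)])
      (measurable_norm.pow_const _).aestronglyMeasurable
  have hpre : (· - x) ⁻¹' ball (0 : E) r = ball x r := by
    ext y
    simp [dist_eq_norm]
  rw [← integral_ball_zero_norm_rpow_neg μ hs hr,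
    ofReal_integral_eq_lintegral_ofReal hint (.of_forall fun y ↦ by positivity),
    ← (measurePreserving_sub_right μ x).setLIntegral_comp_preimage_emb
      (measurableEmbedding_subRight x) (fun y ↦ ENNReal.ofReal (‖y‖ ^ (-s))), hpre]
  simp_rw [norm_sub_rev x]

theorem setLIntegral_mul_rpow_norm_sub_le {θ : E → ℝ} {S : Set E} {M I s : ℝ} (hs₀ : 0 ≤ s)
    (hs : s < finrank ℝ E) (hθ : AEMeasurable θ μ) (hθM : ∀ᵐ y ∂μ, θ y ≤ M)
    (hI : ∫⁻ y in S, ENNReal.ofReal (θ y) ∂μ ≤ ENNReal.ofReal I) (x : E) :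
    ∫⁻ y in S, ENNReal.ofReal (θ y * ‖x - y‖ ^ (-s)) ∂μ ≤
      ENNReal.ofReal ((finrank ℝ E / (finrank ℝ E - s) * μ.real (ball 0 1) + 1) *
        M ^ (s / finrank ℝ E) * I ^ (1 - s / finrank ℝ E)) := by
  set d : ℝ := (finrank ℝ E : ℝ)
  set c := d / (d - s) * μ.real (ball 0 1)
  have hd : 0 < d := Nat.cast_pos.2 finrank_pos
  by_cases hMI : 0 < M ∧ 0 < I
  · obtain ⟨hM, hI₀⟩ := hMI
    set r := (I / M) ^ d⁻¹
    have hr : 0 < r := by positivity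
    have hIr : I = M * r ^ d := by
      rw [← Real.rpow_mul (by positivity), inv_mul_cancel₀ hd.ne', Real.rpow_one,
        mul_div_cancel₀ _ hM.ne']
    calc ∫⁻ y in S, ENNReal.ofReal (θ y * ‖x - y‖ ^ (-s)) ∂μ
        ≤ ENNReal.ofReal M * ∫⁻ y in ball x r, ENNReal.ofReal (‖x - y‖ ^ (-s)) ∂μ +
            ENNReal.ofReal (r ^ (-s)) * ∫⁻ y in S, ENNReal.ofReal (θ y) ∂μ :=
          setLIntegral_mul_rpow_norm_sub_le_add μ hs₀ hr hθM S x
      _ ≤ ENNReal.ofReal M * ENNReal.ofReal (c * r ^ (d - s)) +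
            ENNReal.ofReal (r ^ (-s)) * ENNReal.ofReal I := by
          rw [setLIntegral_ball_rpow_norm_sub μ hs hr.le]
          gcongr
      _ = ENNReal.ofReal ((c + 1) * M ^ (s / d) * I ^ (1 - s / d)) := by
          rw [← ENNReal.ofReal_mul hM.le, ← ENNReal.ofReal_mul (by positivity),
            ← ENNReal.ofReal_add (by positivity) (by positivity), mul_assoc (c + 1),
            rpow_mul_rpow_eq_mul_rpow_sub hM.le hr hd hIr, hIr, Real.rpow_neg hr.le,
            Real.rpow_sub hr]
          field_simp
  · have hθ₀ : ∀ᵐ y ∂μ.restrict S, ENNReal.ofReal (θ y) = 0 := by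
      rcases not_and_or.1 hMI with hM | hI₀
      · exact ae_restrict_of_ae <| hθM.mono fun y hy ↦
          ENNReal.ofReal_eq_zero.2 (hy.trans (not_lt.1 hM))
      · refine (lintegral_eq_zero_iff' hθ.restrict.ennreal_ofReal).1 (le_antisymm ?_ zero_le)
        exact hI.trans_eq (ENNReal.ofReal_eq_zero.2 (not_lt.1 hI₀))
    calc ∫⁻ y in S, ENNReal.ofReal (θ y * ‖x - y‖ ^ (-s)) ∂μ = ∫⁻ _ in S, 0 ∂μ :=
          lintegral_congr_ae <| hθ₀.mono fun y hy ↦ by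
            dsimp only
            rw [ENNReal.ofReal_mul' (by positivity), hy, zero_mul]
      _ ≤ _ := by rw [lintegral_zero]; exact zero_le

end

/-- There is a constant `C = C(α) > 0` such that for every nonnegative
`θ ∈ L¹ ∩ L^∞(ℝ²)` with `M₀ = ‖θ‖_{L^∞}` and every `x ≠ 0`,
`∫_{|x-y| < |x|/2} θ(y) |x-y|^{-(1+α)} dy ≤ C M₀^{(1+α)/2} (∫_{|y| > |x|/2} θ(y) dy)^{(1-α)/2}`. -/
theorem near_field_integral_bound (α : ℝ) (hα : α ∈ Set.Ioo (0 : ℝ) 1) :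
    ∃ C : ℝ, 0 < C ∧ ∀ θ : R2 → ℝ, Measurable θ → (∀ y, 0 ≤ θ y) →
      Integrable θ → MemLp θ ⊤ →
      ∀ M₀ : ℝ, eLpNorm θ ⊤ volume = ENNReal.ofReal M₀ → 0 ≤ M₀ →
      ∀ x : R2, x ≠ 0 →
        ∫ y in {y : R2 | ‖x - y‖ < ‖x‖ / 2}, θ y * ‖x - y‖ ^ (-(1 + α)) ≤
          C * M₀ ^ ((1 + α) / 2) * (∫ y in {y : R2 | ‖x‖ / 2 < ‖y‖}, θ y) ^ ((1 - α) / 2) := by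
  obtain ⟨hα₀, hα₁⟩ := hα
  have hd : (finrank ℝ R2 : ℝ) = 2 := by simp
  set C := 2 / (2 - (1 + α)) * volume.real (ball (0 : R2) 1) + 1
  have hC : 0 < C := by
    have : 0 < 2 - (1 + α) := by linarith
    positivity
  refine ⟨C, hC, fun θ hθ hθ₀ hθint _ M₀ hM hM₀ x _ ↦ ?_⟩
  have hnear : {y : R2 | ‖x - y‖ < ‖x‖ / 2} ⊆ {y | ‖x‖ / 2 < ‖y‖} := by
    intro y (hy : ‖x - y‖ < ‖x‖ / 2)
    show ‖x‖ / 2 < ‖y‖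
    linarith [norm_sub_norm_le x y]
  have hI : ∫⁻ y in {y : R2 | ‖x - y‖ < ‖x‖ / 2}, ENNReal.ofReal (θ y) ≤
      ENNReal.ofReal (∫ y in {y : R2 | ‖x‖ / 2 < ‖y‖}, θ y) :=
    (lintegral_mono_set hnear).trans_eq
      (ofReal_integral_eq_lintegral_ofReal hθint.integrableOn (.of_forall hθ₀)).symm
  have key := setLIntegral_mul_rpow_norm_sub_le volume (s := 1 + α) (by linarith)
    (by rw [hd]; linarith) hθ.aemeasurable (ae_le_of_eLpNorm_top_le hM.le hM₀) hI x
  rw [hd, show 1 - (1 + α) / 2 = (1 - α) / 2 by ring] at key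
  rw [integral_eq_lintegral_of_nonneg_ae (.of_forall fun y ↦ mul_nonneg (hθ₀ y) (by positivity))
    (by fun_prop)]
  have hI₀ : 0 ≤ ∫ y in {y : R2 | ‖x‖ / 2 < ‖y‖}, θ y := integral_nonneg fun y ↦ hθ₀ y
  exact ENNReal.toReal_le_of_le_ofReal (by positivity) key
end
end
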